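/- Let θ, θ1, θ2 ∈ (0, 1/2]. For ξ ∈ {−1,1}, let μ_ξ be the distribution on {−1,1}² of (σ1, σ2) where σ_m = ξ·ε0, σ1 = σ_m·ε1, σ2 = σ_m·ε2, and ε0, ε1, ε2 are independent ±1-valued random variables with P(ε0 = −1) = θ, P(ε1 = −1) = θ1, P(ε2 = −1) = θ2 (this is the noisy tree Υ with root ξ). Let ν_ξ be the distribution on {−1,1}² of (σ̂1, σ̂2) where σ̂1 = ξ·ε0'·ε1', σ̂2 = ξ·ε0''·ε2'', with ε0', ε0'', ε1', ε2'' independent, P(ε0' = −1) = P(ε0'' = −1) = θ, P(ε1' = −1) = θ1, P(ε2'' = −1) = θ2 (this is the stringy tree Υ̂ with root ξ). Then there exists a single Markov kernel K from {−1,1}² to {−1,1}² (not depending on ξ) such that for both ξ = −1 and ξ = +1, pushing ν_ξ through K yields μ_ξ; i.e., for all (a,b) ∈ {−1,1}², μ_ξ(a,b) = ∑_{(u,v)} ν_ξ(u,v)·K((u,v),(a,b)). In other words, the stringy tree Υ̂ dominates Υ. -/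

import Mathlib

open scoped BigOperators

/-- Encoding of `{−1,+1}` by `Bool`: `true ↦ +1`, `false ↦ −1`. Multiplication of signs is
then `a == b`. -/
def signMul (a b : Bool) : Bool := a == b

/-- Distribution of a `±1`-valued flip variable with flip probability `θ`
(`false`, i.e. `−1`, with probability `θ`). -/
noncomputable def flipPr (θ : ℝ) (b : Bool) : ℝ := if b then 1 - θ else θ

/-- The joint law `μ_ξ` of the two leaf spins `(σ₁, σ₂)` of the noisy tree `Υ` with root value
`ξ`: `σ_m = ξ·ε₀`, `σ₁ = σ_m·ε₁`, `σ₂ = σ_m·ε₂`, with independent flips `ε₀, ε₁, ε₂` of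
respective flip probabilities `θ, θ₁, θ₂`. -/
noncomputable def treeLaw (θ θ₁ θ₂ : ℝ) (ξ : Bool) (ab : Bool × Bool) : ℝ :=
  ∑ e₀ : Bool, ∑ e₁ : Bool, ∑ e₂ : Bool,
    flipPr θ e₀ * flipPr θ₁ e₁ * flipPr θ₂ e₂ *
      (if (signMul (signMul ξ e₀) e₁, signMul (signMul ξ e₀) e₂) = ab then 1 else 0)

/-- The joint law `ν_ξ` of the two leaf spins `(σ̂₁, σ̂₂)` of the stringy tree `Υ̂` with root
value `ξ`: `σ̂₁ = ξ·ε₀'·ε₁'`, `σ̂₂ = ξ·ε₀''·ε₂''`, with all four flips independent. -/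
noncomputable def stringyLaw (θ θ₁ θ₂ : ℝ) (ξ : Bool) (ab : Bool × Bool) : ℝ :=
  ∑ e₀ : Bool, ∑ e₀' : Bool, ∑ e₁ : Bool, ∑ e₂ : Bool,
    flipPr θ e₀ * flipPr θ e₀' * flipPr θ₁ e₁ * flipPr θ₂ e₂ *
      (if (signMul (signMul ξ e₀) e₁, signMul (signMul ξ e₀') e₂) = ab then 1 else 0)

/-!
Both leaf laws have the same means `ξ s s₁, ξ s s₂` (with `s = 1 - 2θ`, `sᵢ = 1 - 2θᵢ`), and
differ only in the correlation of the leaves: `s² s₁ s₂` for `Υ̂` against `s₁ s₂` for `Υ`.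
If `s₂ ≤ s₁`, keep the first leaf and, with a fixed probability, replace the second one by a
noisy copy of the first with correlation `s₂ / s₁`. This preserves the means and moves the
correlation to any point between `s² s₁ s₂` and `s₂ / s₁`, a range containing `s₁ s₂`.
-/

open Finset

section Kernels

variable {α α' β β' : Type*}

def IsMarkov [Fintype β] (K : α → β → ℝ) : Prop :=
  (∀ u v, 0 ≤ K u v) ∧ ∀ u, ∑ v, K u v = 1

def push [Fintype α] (ν : α → ℝ) (K : α → β → ℝ) (v : β) : ℝ :=
  ∑ u, ν u * K u v

theorem isMarkov_id [Fintype α] [DecidableEq α] :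
    IsMarkov (fun u v : α => if u = v then (1 : ℝ) else 0) :=
  ⟨fun _ _ => by positivity, fun u => by simp⟩

theorem IsMarkov.convex_comb [Fintype β] {K L : α → β → ℝ} (hK : IsMarkov K)
    (hL : IsMarkov L) {p q : ℝ} (hp : 0 ≤ p) (hq : 0 ≤ q) (hpq : p + q = 1) :
    IsMarkov (fun u v => p * K u v + q * L u v) := by
  refine ⟨fun u v => by have := hK.1 u v; have := hL.1 u v; positivity, fun u => ?_⟩
  rw [sum_add_distrib, ← mul_sum, ← mul_sum, hK.2, hL.2, mul_one, mul_one, hpq]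

theorem IsMarkov.comp_equiv [Fintype β] [Fintype β'] {K : α → β → ℝ} (hK : IsMarkov K)
    (e : α' → α) (f : β' ≃ β) : IsMarkov (fun u v => K (e u) (f v)) :=
  ⟨fun _ _ => hK.1 _ _, fun u => (f.sum_comp (K (e u))).trans (hK.2 _)⟩

theorem push_id [Fintype α] [DecidableEq α] (ν : α → ℝ) :
    push ν (fun u v => if u = v then 1 else 0) = ν := by
  ext v
  simp [push]

theorem push_convex_comb [Fintype α] (ν : α → ℝ) (K L : α → β → ℝ) (p q : ℝ) :
    push ν (fun u v => p * K u v + q * L u v) =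
      fun v => p * push ν K v + q * push ν L v := by
  ext v
  simp only [push, mul_add, sum_add_distrib, mul_sum]
  congr 1 <;> exact sum_congr rfl fun _ _ => by ring

theorem push_comp_equiv [Fintype α] [Fintype α'] (ν : α → ℝ) (K : α → β → ℝ) (e : α' ≃ α)
    (f : β' → β) : push (ν ∘ e) (fun u v => K (e u) (f v)) = push ν K ∘ f := by
  ext v
  exact e.sum_comp fun u => ν u * K u (f v)

end Kernels

section Spins

def spin (b : Bool) : ℝ := if b then 1 else -1

/-- The law on `{−1,1}²` with means `m₁, m₂` and correlation `c` (a signed measure in general). -/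
noncomputable def spinPairLaw (m₁ m₂ c : ℝ) (ab : Bool × Bool) : ℝ :=
  (1 + m₁ * spin ab.1 + m₂ * spin ab.2 + c * spin ab.1 * spin ab.2) / 4

/-- Keep the first spin `u`; the second becomes a copy of `u` with correlation `t`. -/
noncomputable def noisyCopyKernel (t : ℝ) (uv ab : Bool × Bool) : ℝ :=
  if ab.1 = uv.1 then (1 + t * spin uv.1 * spin ab.2) / 2 else 0

theorem isMarkov_noisyCopyKernel {t : ℝ} (ht : |t| ≤ 1) : IsMarkov (noisyCopyKernel t) := by
  obtain ⟨ht₁, ht₂⟩ := abs_le.1 ht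
  refine ⟨?_, ?_⟩
  · rintro ⟨u, v⟩ ⟨a, b⟩
    cases u <;> cases a <;> cases b <;> simp [noisyCopyKernel, spin] <;> linarith
  · rintro ⟨u, v⟩
    cases u <;> simp [noisyCopyKernel, spin, Fintype.sum_prod_type] <;> ring

theorem push_spinPairLaw_noisyCopyKernel (m₁ m₂ c t : ℝ) :
    push (spinPairLaw m₁ m₂ c) (noisyCopyKernel t) = spinPairLaw m₁ (t * m₁) t := by
  ext ⟨a, b⟩
  cases a <;> cases b <;>
    simp [push, spinPairLaw, noisyCopyKernel, spin, Fintype.sum_prod_type] <;> ring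

theorem spinPairLaw_convex_comb {p q : ℝ} (hpq : p + q = 1) (m₁ m₂ m₂' c c' : ℝ) :
    (fun ab => p * spinPairLaw m₁ m₂ c ab + q * spinPairLaw m₁ m₂' c' ab) =
      spinPairLaw m₁ (p * m₂ + q * m₂') (p * c + q * c') := by
  ext ab
  rw [eq_sub_of_add_eq hpq]
  simp only [spinPairLaw]
  ring

theorem spinPairLaw_comp_swap (m₁ m₂ c : ℝ) :
    spinPairLaw m₁ m₂ c ∘ Prod.swap = spinPairLaw m₂ m₁ c := by
  ext ab
  simp only [spinPairLaw, Function.comp, Prod.fst_swap, Prod.snd_swap]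
  ring

theorem exists_isMarkov_push_spinPairLaw {s₁ s₂ c₀ c : ℝ} (hs : |s₂| ≤ s₁)
    (hc : c ∈ segment ℝ c₀ (s₂ / s₁)) :
    ∃ K, IsMarkov K ∧ ∀ x : ℝ,
      push (spinPairLaw (x * s₁) (x * s₂) c₀) K = spinPairLaw (x * s₁) (x * s₂) c := by
  obtain ⟨p, q, hp, hq, hpq, rfl⟩ := hc
  have ht : |s₂ / s₁| ≤ 1 := by
    rw [abs_div, abs_of_nonneg ((abs_nonneg s₂).trans hs)]
    exact div_le_one_of_le₀ hs ((abs_nonneg s₂).trans hs)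
  have hts : s₂ / s₁ * s₁ = s₂ :=
    div_mul_cancel_of_imp fun h => abs_nonpos_iff.1 (h ▸ hs)
  refine ⟨fun u v => p * (if u = v then 1 else 0) + q * noisyCopyKernel (s₂ / s₁) u v,
    isMarkov_id.convex_comb (isMarkov_noisyCopyKernel ht) hp hq hpq, fun x => ?_⟩
  rw [push_convex_comb, push_id, push_spinPairLaw_noisyCopyKernel, spinPairLaw_convex_comb hpq]
  congr 1
  linear_combination (q * x) * hts + (x * s₂) * hpq

theorem exists_isMarkov_push_spinPairLaw' {s₁ s₂ c₀ c : ℝ} (hs : |s₁| ≤ s₂)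
    (hc : c ∈ segment ℝ c₀ (s₁ / s₂)) :
    ∃ K, IsMarkov K ∧ ∀ x : ℝ,
      push (spinPairLaw (x * s₁) (x * s₂) c₀) K = spinPairLaw (x * s₁) (x * s₂) c := by
  obtain ⟨K, hK, hpush⟩ := exists_isMarkov_push_spinPairLaw hs hc
  refine ⟨fun u v => K u.swap v.swap, hK.comp_equiv _ (Equiv.prodComm _ _), fun x => ?_⟩
  rw [← spinPairLaw_comp_swap (x * s₂), ← spinPairLaw_comp_swap (x * s₂)]
  exact (push_comp_equiv _ K (Equiv.prodComm _ _) _).trans (congrArg (· ∘ Prod.swap) (hpush x))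

end Spins

theorem treeLaw_eq_spinPairLaw (θ θ₁ θ₂ : ℝ) (ξ : Bool) :
    treeLaw θ θ₁ θ₂ ξ = spinPairLaw (spin ξ * (1 - 2 * θ) * (1 - 2 * θ₁))
      (spin ξ * (1 - 2 * θ) * (1 - 2 * θ₂)) ((1 - 2 * θ₁) * (1 - 2 * θ₂)) := by
  ext ⟨a, b⟩
  cases ξ <;> cases a <;> cases b <;>
    simp [treeLaw, spinPairLaw, flipPr, signMul, spin] <;> ring

theorem stringyLaw_eq_spinPairLaw (θ θ₁ θ₂ : ℝ) (ξ : Bool) :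
    stringyLaw θ θ₁ θ₂ ξ = spinPairLaw (spin ξ * (1 - 2 * θ) * (1 - 2 * θ₁))
      (spin ξ * (1 - 2 * θ) * (1 - 2 * θ₂)) ((1 - 2 * θ) ^ 2 * (1 - 2 * θ₁) * (1 - 2 * θ₂)) := by
  ext ⟨a, b⟩
  cases ξ <;> cases a <;> cases b <;>
    simp [stringyLaw, spinPairLaw, flipPr, signMul, spin] <;> ring

theorem mul_le_div_self {a b : ℝ} (ha : 0 ≤ a) (ha₁ : a ≤ 1) (hb : 0 ≤ b) : a * b ≤ b / a := by
  rcases ha.eq_or_lt with rfl | ha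
  · simp
  · rw [le_div_iff₀ ha]
    nlinarith [mul_nonneg (mul_nonneg ha.le hb) (sub_nonneg.2 ha₁)]

/-- **Key special case of Theorem 6.1 of Evans–Kenyon–Peres–Schulman, as used by
Cox–Peres–Steif.** There is a single Markov kernel `K` on `{−1,1}²`, not depending on the root
value `ξ`, transforming the stringy-tree leaf law `ν_ξ` into the noisy-tree leaf law `μ_ξ`;
i.e. the stringy tree `Υ̂` dominates `Υ`. -/
theorem stmt_14 (θ θ₁ θ₂ : ℝ) (hθ : θ ∈ Set.Ioc (0 : ℝ) (1 / 2))
    (hθ₁ : θ₁ ∈ Set.Ioc (0 : ℝ) (1 / 2)) (hθ₂ : θ₂ ∈ Set.Ioc (0 : ℝ) (1 / 2)) :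
    ∃ K : Bool × Bool → Bool × Bool → ℝ,
      (∀ u v, 0 ≤ K u v) ∧ (∀ u, ∑ v, K u v = 1) ∧
        ∀ ξ : Bool, ∀ ab : Bool × Bool,
          treeLaw θ θ₁ θ₂ ξ ab = ∑ u, stringyLaw θ θ₁ θ₂ ξ u * K u ab := by
  obtain ⟨hθ, hθ'⟩ := hθ
  obtain ⟨hθ₁, hθ₁'⟩ := hθ₁
  obtain ⟨hθ₂, hθ₂'⟩ := hθ₂
  have hcorr : (1 - 2 * θ) ^ 2 * (1 - 2 * θ₁) * (1 - 2 * θ₂) ≤ (1 - 2 * θ₁) * (1 - 2 * θ₂) := by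
    rw [mul_assoc]
    exact mul_le_of_le_one_left (by nlinarith) (by nlinarith)
  obtain ⟨K, hK, hpush⟩ : ∃ K, IsMarkov K ∧ ∀ x : ℝ,
      push (spinPairLaw (x * (1 - 2 * θ₁)) (x * (1 - 2 * θ₂))
          ((1 - 2 * θ) ^ 2 * (1 - 2 * θ₁) * (1 - 2 * θ₂))) K =
        spinPairLaw (x * (1 - 2 * θ₁)) (x * (1 - 2 * θ₂)) ((1 - 2 * θ₁) * (1 - 2 * θ₂)) := by
    rcases le_total θ₁ θ₂ with h | h
    · exact exists_isMarkov_push_spinPairLaw (abs_le.2 ⟨by linarith, by linarith⟩)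
        (Icc_subset_segment ⟨hcorr, mul_le_div_self (by linarith) (by linarith) (by linarith)⟩)
    · refine exists_isMarkov_push_spinPairLaw' (abs_le.2 ⟨by linarith, by linarith⟩)
        (Icc_subset_segment ⟨hcorr, ?_⟩)
      rw [mul_comm]
      exact mul_le_div_self (by linarith) (by linarith) (by linarith)
  refine ⟨K, hK.1, hK.2, fun ξ ab => ?_⟩
  rw [treeLaw_eq_spinPairLaw, stringyLaw_eq_spinPairLaw, ← hpush]
  rfl
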